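/- (Core identity behind Corollary 3.) Suppose the two-view imaging equation z_j X_j = z_i R X_i + t holds with depth z_i > 0, and set θ := (R X_i) × X_j. Then ‖θ‖ ‖X_j × t‖ R X_i + ‖θ‖² t = −(X_j × θ) × ((R X_i) × t), and this common value equals z_j ‖θ‖² X_j. (The right-hand side is S t for the matrix S := −[X_j × θ]_× [R X_i]_×, so the homogeneous reprojection vector ‖θ‖ Y, with Y := ‖X_j × t‖ R X_i + ‖θ‖ t, depends linearly on t.) -/

import Mathlib

/-!
Since `t = zⱼ Xⱼ - zᵢ R Xᵢ`, both cross products with `t` are multiples of `θ`: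
`Xⱼ × t = zᵢ θ` and `(R Xᵢ) × t = zⱼ θ`. The first gives `‖Xⱼ × t‖ = zᵢ ‖θ‖`, so the left side
is `‖θ‖² (zᵢ R Xᵢ + t) = zⱼ ‖θ‖² Xⱼ`; the second, with `θ ⊥ Xⱼ` and the vector triple product
expansion, turns the right side into `zⱼ θ × (Xⱼ × θ) = zⱼ ‖θ‖² Xⱼ`.
-/

open Matrix

noncomputable def enorm3 (v : Fin 3 → ℝ) : ℝ := Real.sqrt (v ⬝ᵥ v)

lemma enorm3_sq (v : Fin 3 → ℝ) : enorm3 v ^ 2 = v ⬝ᵥ v :=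
  Real.sq_sqrt (dotProduct_self_star_nonneg v)

lemma enorm3_smul (c : ℝ) (v : Fin 3 → ℝ) : enorm3 (c • v) = |c| * enorm3 v := by
  rw [enorm3, enorm3, dotProduct_smul, smul_dotProduct, smul_smul, smul_eq_mul,
    Real.sqrt_mul (mul_self_nonneg c), Real.sqrt_mul_self_eq_abs]

section CrossProduct

variable {R : Type*} [CommRing R] (u v : Fin 3 → R) (a b : R)

lemma cross_smul_sub_smul_left : v ⨯₃ (a • v - b • u) = b • (u ⨯₃ v) := by
  rw [map_sub, map_smul, map_smul, cross_self, smul_zero, zero_sub, ← smul_neg, cross_anticomm]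

lemma cross_smul_sub_smul_right : u ⨯₃ (a • v - b • u) = a • (u ⨯₃ v) := by
  rw [map_sub, map_smul, map_smul, cross_self, smul_zero, sub_zero]

lemma neg_cross_cross_cross_self :
    -((v ⨯₃ (u ⨯₃ v)) ⨯₃ (u ⨯₃ v)) = ((u ⨯₃ v) ⬝ᵥ (u ⨯₃ v)) • v := by
  rw [cross_anticomm, cross_cross_eq_smul_sub_smul', dotProduct_comm (u ⨯₃ v), dot_cross_self,
    zero_smul, sub_zero]

end CrossProduct

theorem stmt10_general (R : Matrix (Fin 3) (Fin 3) ℝ)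
    (Xi Xj t : Fin 3 → ℝ) (zi zj : ℝ)
    (himg : zj • Xj = zi • R.mulVec Xi + t)
    (hzi : 0 < zi)
    (θ : Fin 3 → ℝ) (hθ : θ = (R.mulVec Xi) ⨯₃ Xj) :
    (enorm3 θ * enorm3 (Xj ⨯₃ t)) • R.mulVec Xi + (enorm3 θ) ^ 2 • t
        = -((Xj ⨯₃ θ) ⨯₃ ((R.mulVec Xi) ⨯₃ t)) ∧
      -((Xj ⨯₃ θ) ⨯₃ ((R.mulVec Xi) ⨯₃ t)) = (zj * (enorm3 θ) ^ 2) • Xj := by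
  set u := R.mulVec Xi
  have ht : t = zj • Xj - zi • u := by rw [himg, add_sub_cancel_left]
  have hXt : Xj ⨯₃ t = zi • θ := by rw [ht, hθ, cross_smul_sub_smul_left]
  have hut : u ⨯₃ t = zj • θ := by rw [ht, hθ, cross_smul_sub_smul_right]
  have hS : -((Xj ⨯₃ θ) ⨯₃ (u ⨯₃ t)) = (zj * enorm3 θ ^ 2) • Xj := by
    rw [hut, map_smul, ← smul_neg, hθ, neg_cross_cross_cross_self, enorm3_sq, mul_smul]
  have hY : (enorm3 θ * enorm3 (Xj ⨯₃ t)) • u + enorm3 θ ^ 2 • t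
      = (zj * enorm3 θ ^ 2) • Xj := by
    rw [hXt, enorm3_smul, abs_of_pos hzi, mul_comm zj, mul_smul _ zj, himg]
    module
  exact ⟨hY.trans hS.symm, hS⟩

/-- core identity behind Corollary 3: if `zⱼ Xⱼ = zᵢ R Xᵢ + t` holds with
`zᵢ > 0` and `θ := (R Xᵢ) × Xⱼ`, then
`‖θ‖ ‖Xⱼ × t‖ R Xᵢ + ‖θ‖² t = −(Xⱼ × θ) × ((R Xᵢ) × t)`, and this common value equals
`zⱼ ‖θ‖² Xⱼ`. -/
theorem stmt10 (R : Matrix (Fin 3) (Fin 3) ℝ)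
    (hR : Rᵀ * R = 1) (hRdet : R.det = 1)
    (Xi Xj t : Fin 3 → ℝ) (zi zj : ℝ)
    (himg : zj • Xj = zi • R.mulVec Xi + t)
    (hzi : 0 < zi)
    (θ : Fin 3 → ℝ) (hθ : θ = (R.mulVec Xi) ⨯₃ Xj) :
    (enorm3 θ * enorm3 (Xj ⨯₃ t)) • R.mulVec Xi + (enorm3 θ) ^ 2 • t
        = -((Xj ⨯₃ θ) ⨯₃ ((R.mulVec Xi) ⨯₃ t)) ∧
      -((Xj ⨯₃ θ) ⨯₃ ((R.mulVec Xi) ⨯₃ t)) = (zj * (enorm3 θ) ^ 2) • Xj :=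
  stmt10_general R Xi Xj t zi zj himg hzi θ hθ
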